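/- Let T be a rooted binary phylogenetic tree on leaf set [n] and let x ∈ Z^n_{2,even} be a 0/1 vector of length n with an even number of ones. Then there exists a unique perfect matching (pairing) of the set of leaves {ℓ ∈ [n] : x_ℓ = 1} such that the paths in T between the paired leaves are pairwise vertex-disjoint. -/

import Mathlib

/-- Rooted binary trees with leaves labeled by natural numbers. -/
inductive PhyloTree where
  | leaf : ℕ → PhyloTree
  | node : PhyloTree → PhyloTree → PhyloTree
deriving DecidableEq

namespace PhyloTree

/-- The set of leaf labels of a tree. -/
def leaves : PhyloTree → Finset ℕ
  | leaf i => {i}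
  | node l r => leaves l ∪ leaves r

/-- The list of leaf labels (left-to-right). -/
def leafList : PhyloTree → List ℕ
  | leaf i => [i]
  | node l r => leafList l ++ leafList r

/-- `t` is a rooted binary phylogenetic tree on leaf set `[n] = {0, …, n-1}`:
its leaves are bijectively labeled by `{0, …, n-1}`. -/
def IsPhylo (n : ℕ) (t : PhyloTree) : Prop :=
  t.leafList.Nodup ∧ t.leafList.toFinset = Finset.range n

/-- The subtrees of `t`; these are identified with the vertices of `t`. -/
def subtrees : PhyloTree → Finset PhyloTree
  | leaf i => {leaf i}
  | node l r => insert (node l r) (subtrees l ∪ subtrees r)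

/-- Whether the root of the tree is an internal (non-leaf) vertex. -/
def isInternal : PhyloTree → Bool
  | leaf _ => false
  | node _ _ => true

/-- The internal vertices of `t`, identified with the subtrees rooted at them. -/
def internalVertices (t : PhyloTree) : Finset PhyloTree :=
  t.subtrees.filter (fun s => s.isInternal)

/-- The most recent common ancestor of the leaves labeled `i` and `j`,
identified with the subtree rooted at it. -/
def mrca (t : PhyloTree) (i j : ℕ) : PhyloTree :=
  match t with
  | leaf a => leaf a
  | node l r =>
    if i ∈ l.leaves ∧ j ∈ l.leaves then mrca l i j
    else if i ∈ r.leaves ∧ j ∈ r.leaves then mrca r i j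
    else node l r

/-- The most recent common ancestor of a set `p` of leaf labels. -/
def mrcaSet (t : PhyloTree) (p : Finset ℕ) : PhyloTree :=
  match t with
  | leaf a => leaf a
  | node l r =>
    if p ⊆ l.leaves then mrcaSet l p
    else if p ⊆ r.leaves then mrcaSet r p
    else node l r

/-- A vertex (= subtree) is a top-most node of a path in the system of disjoint
paths `𝔓(x)` iff an odd number of elements of `x` lies below each of its two
children. -/
def isTopOf (x : Finset ℕ) : PhyloTree → Bool
  | leaf _ => false
  | node l r => decide (Odd (x ∩ l.leaves).card) && decide (Odd (x ∩ r.leaves).card)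

/-- `top(x)`: the set of top-most nodes of the paths in the system `𝔓(x)` of
pairwise disjoint paths joining the leaves in `x`. -/
def topSet (t : PhyloTree) (x : Finset ℕ) : Finset PhyloTree :=
  t.subtrees.filter (fun s => isTopOf x s)

/-- The vertices of the path in `t` between the leaves of the pair `p` (more
generally, the vertices of the smallest subtree of `t` spanning `p`). -/
def pathSet (t : PhyloTree) (p : Finset ℕ) : Finset PhyloTree :=
  (mrcaSet t p).subtrees.filter (fun s => ∃ ℓ ∈ p, ℓ ∈ s.leaves)

/-- `u` is a strict descendant of `w`. -/
def IsStrictDescendant (u w : PhyloTree) : Prop :=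
  u ≠ w ∧ u ∈ w.subtrees

end PhyloTree

/-- `ℤ₂ⁿ`-vectors with an even number of ones, encoded as even-size subsets of `Fin n`. -/
abbrev EvenSubsets (n : ℕ) := {x : Finset (Fin n) // Even x.card}

/-- Forget the bound `n`, regarding a set of coordinates as a set of leaf labels. -/
def EvenSubsets.toNat {n : ℕ} (x : EvenSubsets n) : Finset ℕ := x.1.image Fin.val

/-- The vector `1_{i,j}` with ones exactly in positions `i ≠ j`. -/
def pairIdx {n : ℕ} (i j : Fin n) (h : i ≠ j) : EvenSubsets n :=
  ⟨{i, j}, by rw [Finset.card_pair h]; exact ⟨1, rfl⟩⟩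

open MvPolynomial in
/-- The monomial map `φ_T : ℂ[q_x] → ℂ[b₀, b_v]`, `q_x ↦ b₀ ∏_{v ∈ top(x)} b_v`. -/
noncomputable def phiCFNMC (n : ℕ) (t : PhyloTree) :
    MvPolynomial (EvenSubsets n) ℂ →ₐ[ℂ] MvPolynomial (Option PhyloTree) ℂ :=
  aeval (fun x => X none * ∏ s ∈ t.topSet x.toNat, X (some s))

/-- The CFN-MC ideal `I_T = ker φ_T`. -/
noncomputable def cfnIdeal (n : ℕ) (t : PhyloTree) : Ideal (MvPolynomial (EvenSubsets n) ℂ) :=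
  RingHom.ker (phiCFNMC n t)

/-!
Induct on the tree, letting at most one leaf of `x` stay *open*: joined to the root instead of
to another leaf of `x`. Parity rules out an open leaf when `x` is even.
At a node, path systems on the two children combine side by side, and if both have an open leaf,
these two are joined through the root. Conversely every path between the two sides passes through
the root, so at most one pair crosses it; removing that pair splits any system at the node into
systems on the children, which are unique by induction.
-/

section PerfectMatching

variable {α : Type*} [DecidableEq α]

structure IsPerfectMatching (x : Finset α) (M : Finset (Finset α)) : Prop where
  card_eq_two : ∀ p ∈ M, p.card = 2
  pairwiseDisjoint : (M : Set (Finset α)).PairwiseDisjoint id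
  sup_eq : M.sup id = x

namespace IsPerfectMatching

variable {x : Finset α} {M : Finset (Finset α)}

theorem subset (h : IsPerfectMatching x M) {p : Finset α} (hp : p ∈ M) : p ⊆ x :=
  h.sup_eq ▸ Finset.le_sup (f := id) hp

theorem nonempty (h : IsPerfectMatching x M) {p : Finset α} (hp : p ∈ M) : p.Nonempty :=
  Finset.card_pos.mp (by rw [h.card_eq_two p hp]; norm_num)

theorem card_eq (h : IsPerfectMatching x M) : x.card = 2 * M.card := by
  rw [← h.sup_eq, Finset.sup_eq_biUnion, Finset.card_biUnion h.pairwiseDisjoint]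
  exact (Finset.sum_const_nat h.card_eq_two).trans (mul_comm _ _)

theorem union {y : Finset α} {N : Finset (Finset α)} (hx : IsPerfectMatching x M)
    (hy : IsPerfectMatching y N) (hxy : Disjoint x y) : IsPerfectMatching (x ∪ y) (M ∪ N) where
  card_eq_two p hp := (Finset.mem_union.mp hp).elim (hx.card_eq_two p) (hy.card_eq_two p)
  pairwiseDisjoint := by
    rw [Finset.coe_union, Set.pairwiseDisjoint_union]
    exact ⟨hx.pairwiseDisjoint, hy.pairwiseDisjoint,
      fun p hp q hq _ => hxy.mono (hx.subset hp) (hy.subset hq)⟩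
  sup_eq := by rw [Finset.sup_union, hx.sup_eq, hy.sup_eq, Finset.sup_eq_union]

theorem insert {p : Finset α} (h : IsPerfectMatching (x \ p) M) (hpx : p ⊆ x)
    (hp : p.card = 2) : IsPerfectMatching x (insert p M) where
  card_eq_two q hq := (Finset.mem_insert.mp hq).elim (· ▸ hp) (h.card_eq_two q)
  pairwiseDisjoint := by
    rw [Finset.coe_insert]
    exact h.pairwiseDisjoint.insert fun q hq _ => Finset.disjoint_sdiff.mono_right (h.subset hq)
  sup_eq := by rw [Finset.sup_insert, h.sup_eq, id, Finset.sup_eq_union,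
    Finset.union_sdiff_of_subset hpx]

theorem erase (h : IsPerfectMatching x M) {p : Finset α} (hp : p ∈ M) :
    IsPerfectMatching (x \ p) (M.erase p) where
  card_eq_two q hq := h.card_eq_two q (Finset.mem_of_mem_erase hq)
  pairwiseDisjoint := h.pairwiseDisjoint.subset (Finset.coe_subset.mpr (Finset.erase_subset _ _))
  sup_eq := by
    have hdisj : Disjoint p ((M.erase p).sup id) := Finset.disjoint_sup_right.mpr fun q hq =>
      h.pairwiseDisjoint hp (Finset.mem_of_mem_erase hq) (Finset.ne_of_mem_erase hq).symm
    conv_rhs => rw [← h.sup_eq, ← Finset.insert_erase hp, Finset.sup_insert]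
    rw [id, Finset.sup_eq_union, Finset.union_sdiff_cancel_left hdisj]

theorem filter (h : IsPerfectMatching x M) {L : Finset α}
    (hM : ∀ p ∈ M, p ⊆ L ∨ Disjoint p L) :
    IsPerfectMatching (x ∩ L) (M.filter (· ⊆ L)) where
  card_eq_two q hq := h.card_eq_two q (Finset.mem_of_mem_filter q hq)
  pairwiseDisjoint := h.pairwiseDisjoint.subset (Finset.coe_subset.mpr (Finset.filter_subset _ _))
  sup_eq := by
    ext a
    simp only [← h.sup_eq, Finset.mem_sup, Finset.mem_filter, Finset.mem_inter, id]
    constructor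
    · rintro ⟨p, ⟨hp, hpL⟩, ha⟩
      exact ⟨⟨p, hp, ha⟩, hpL ha⟩
    · rintro ⟨⟨p, hp, ha⟩, haL⟩
      refine ⟨p, ⟨hp, (hM p hp).resolve_right fun hd => ?_⟩, ha⟩
      exact Finset.disjoint_left.mp hd ha haL

end IsPerfectMatching

theorem isPerfectMatching_iff {x : Finset α} {M : Finset (Finset α)} :
    IsPerfectMatching x M ↔ (∀ p ∈ M, p.card = 2) ∧ (∀ p ∈ M, p ⊆ x) ∧
      ∀ a ∈ x, ∃! p, p ∈ M ∧ a ∈ p := by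
  constructor
  · intro h
    refine ⟨h.card_eq_two, fun p => h.subset, fun a ha => ?_⟩
    obtain ⟨p, hp, hap⟩ := Finset.mem_sup.mp (h.sup_eq ▸ ha)
    refine ⟨p, ⟨hp, hap⟩, fun q ⟨hq, haq⟩ => ?_⟩
    by_contra hqp
    exact Finset.disjoint_left.mp (h.pairwiseDisjoint hq hp hqp) haq hap
  · rintro ⟨hcard, hsub, huniq⟩
    refine ⟨hcard, fun p hp q hq hpq => Finset.disjoint_left.mpr fun a hap haq => hpq ?_, ?_⟩
    · obtain ⟨u, -, hu⟩ := huniq a (hsub p hp hap)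
      exact (hu p ⟨hp, hap⟩).trans (hu q ⟨hq, haq⟩).symm
    · refine le_antisymm (Finset.sup_le fun p hp => hsub p hp) fun a ha => ?_
      obtain ⟨p, ⟨hp, hap⟩, -⟩ := huniq a ha
      exact Finset.mem_sup.mpr ⟨p, hp, hap⟩

end PerfectMatching

namespace PhyloTree

theorem leaves_eq_toFinset (t : PhyloTree) : t.leaves = t.leafList.toFinset := by
  induction t with
  | leaf i => simp [leaves, leafList]
  | node l r ihl ihr => simp [leaves, leafList, ihl, ihr]

theorem leaves_nonempty (t : PhyloTree) : t.leaves.Nonempty := by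
  induction t with
  | leaf i => exact ⟨i, Finset.mem_singleton_self i⟩
  | node l r ihl _ => exact ihl.mono Finset.subset_union_left

theorem inter_leaves_union_inter_leaves {l r : PhyloTree} {x : Finset ℕ}
    (hx : x ⊆ (node l r).leaves) : x ∩ l.leaves ∪ x ∩ r.leaves = x :=
  (Finset.inter_union_distrib_left _ _ _).symm.trans (Finset.inter_eq_left.mpr hx)

theorem self_mem_subtrees (t : PhyloTree) : t ∈ t.subtrees := by
  cases t <;> simp [subtrees]

theorem left_mem_subtrees_node (l r : PhyloTree) : l ∈ (node l r).subtrees := by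
  simp [subtrees, self_mem_subtrees]

theorem right_mem_subtrees_node (l r : PhyloTree) : r ∈ (node l r).subtrees := by
  simp [subtrees, self_mem_subtrees]

theorem subtrees_subset_of_mem {s t : PhyloTree} (h : s ∈ t.subtrees) :
    s.subtrees ⊆ t.subtrees := by
  induction t with
  | leaf i => simp only [subtrees, Finset.mem_singleton] at h; rw [h]
  | node l r ihl ihr =>
    simp only [subtrees, Finset.mem_insert, Finset.mem_union] at h
    rcases h with rfl | h | h
    · exact subset_rfl
    · exact (ihl h).trans (Finset.subset_union_left.trans (Finset.subset_insert _ _))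
    · exact (ihr h).trans (Finset.subset_union_right.trans (Finset.subset_insert _ _))

theorem leaves_subset_of_mem_subtrees {s t : PhyloTree} (h : s ∈ t.subtrees) :
    s.leaves ⊆ t.leaves := by
  induction t with
  | leaf i => simp only [subtrees, Finset.mem_singleton] at h; rw [h]
  | node l r ihl ihr =>
    simp only [subtrees, Finset.mem_insert, Finset.mem_union] at h
    rcases h with rfl | h | h
    · exact subset_rfl
    · exact (ihl h).trans Finset.subset_union_left
    · exact (ihr h).trans Finset.subset_union_right

theorem disjoint_subtrees_of_disjoint_leaves {l r : PhyloTree}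
    (h : Disjoint l.leaves r.leaves) : Disjoint l.subtrees r.subtrees := by
  refine Finset.disjoint_left.mpr fun s hsl hsr => ?_
  obtain ⟨a, ha⟩ := leaves_nonempty s
  exact Finset.disjoint_left.mp h (leaves_subset_of_mem_subtrees hsl ha)
    (leaves_subset_of_mem_subtrees hsr ha)

theorem nodup_node_iff {l r : PhyloTree} :
    (node l r).leafList.Nodup ↔
      l.leafList.Nodup ∧ r.leafList.Nodup ∧ Disjoint l.leaves r.leaves := by
  simp only [leafList, List.nodup_append, leaves_eq_toFinset, Finset.disjoint_left,
    List.mem_toFinset]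
  exact and_congr_right' <| and_congr_right' ⟨fun h a ha hb => h a ha a hb rfl,
    fun h a ha b hb hab => h ha (hab ▸ hb)⟩

theorem mrcaSet_mem_subtrees (t : PhyloTree) (p : Finset ℕ) : t.mrcaSet p ∈ t.subtrees := by
  induction t with
  | leaf i => simp [mrcaSet, subtrees]
  | node l r ihl ihr =>
    unfold mrcaSet
    split_ifs
    · exact subtrees_subset_of_mem (left_mem_subtrees_node l r) ihl
    · exact subtrees_subset_of_mem (right_mem_subtrees_node l r) ihr
    · exact self_mem_subtrees _

theorem pathSet_subset_subtrees (t : PhyloTree) (p : Finset ℕ) : t.pathSet p ⊆ t.subtrees :=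
  (Finset.filter_subset _ _).trans (subtrees_subset_of_mem (mrcaSet_mem_subtrees t p))

theorem mrcaSet_eq_of_mem_subtrees {t s : PhyloTree} {p : Finset ℕ} (hnd : t.leafList.Nodup)
    (hs : s ∈ t.subtrees) (hp : p ⊆ s.leaves) (hne : p.Nonempty) :
    t.mrcaSet p = s.mrcaSet p := by
  induction t with
  | leaf i => simp only [subtrees, Finset.mem_singleton] at hs; rw [hs]
  | node l r ihl ihr =>
    obtain ⟨hndl, hndr, hd⟩ := nodup_node_iff.mp hnd
    simp only [subtrees, Finset.mem_insert, Finset.mem_union] at hs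
    rcases hs with rfl | hs | hs
    · rfl
    · rw [mrcaSet, if_pos (hp.trans (leaves_subset_of_mem_subtrees hs)), ihl hndl hs]
    · have hpr := hp.trans (leaves_subset_of_mem_subtrees hs)
      have hpl : ¬ p ⊆ l.leaves := fun hpl =>
        have ⟨a, ha⟩ := hne
        Finset.disjoint_left.mp hd (hpl ha) (hpr ha)
      rw [mrcaSet, if_neg hpl, if_pos hpr, ihr hndr hs]

theorem pathSet_eq_of_mem_subtrees {t s : PhyloTree} {p : Finset ℕ} (hnd : t.leafList.Nodup)
    (hs : s ∈ t.subtrees) (hp : p ⊆ s.leaves) (hne : p.Nonempty) :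
    t.pathSet p = s.pathSet p := by
  rw [pathSet, pathSet, mrcaSet_eq_of_mem_subtrees hnd hs hp hne]

theorem mem_pathSet_of_mrcaSet_eq {t s : PhyloTree} {p : Finset ℕ} {ℓ : ℕ}
    (h : t.mrcaSet p = t) (hs : s ∈ t.subtrees) (hℓ : ℓ ∈ p) (hℓs : ℓ ∈ s.leaves) :
    s ∈ t.pathSet p := by
  rw [pathSet, h]
  exact Finset.mem_filter.mpr ⟨hs, ℓ, hℓ, hℓs⟩

theorem mrcaSet_node_of_not_subset {l r : PhyloTree} {p : Finset ℕ} (hpl : ¬ p ⊆ l.leaves)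
    (hpr : ¬ p ⊆ r.leaves) : (node l r).mrcaSet p = node l r := by
  rw [mrcaSet, if_neg hpl, if_neg hpr]

/-- `M` pairs up the leaves of `x \ o` along pairwise vertex-disjoint paths of `t`, while each
leaf of `o` stays open: its path up to the root, i.e. the set of subtrees containing it, meets none
of these paths. -/
structure IsPathMatching (t : PhyloTree) (x o : Finset ℕ) (M : Finset (Finset ℕ)) : Prop where
  subset : o ⊆ x
  isPerfectMatching : IsPerfectMatching (x \ o) M
  pairwiseDisjoint : (M : Set (Finset ℕ)).PairwiseDisjoint t.pathSet
  disjoint_leaves : ∀ p ∈ M, ∀ s ∈ t.pathSet p, Disjoint o s.leaves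

variable {t l r : PhyloTree} {x o : Finset ℕ} {M : Finset (Finset ℕ)}

theorem isPathMatching_self (t : PhyloTree) (x : Finset ℕ) : IsPathMatching t x x ∅ where
  subset := subset_rfl
  isPerfectMatching := ⟨by simp, by simp, by simp⟩
  pairwiseDisjoint := by simp
  disjoint_leaves := by simp

theorem isPathMatching_empty_iff :
    IsPathMatching t x ∅ M ↔
      (∀ p ∈ M, p.card = 2) ∧ (∀ p ∈ M, p ⊆ x) ∧ (∀ ℓ ∈ x, ∃! p, p ∈ M ∧ ℓ ∈ p) ∧
      (∀ p ∈ M, ∀ q ∈ M, p ≠ q → Disjoint (t.pathSet p) (t.pathSet q)) := by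
  constructor
  · rintro ⟨-, hM, hpd, -⟩
    rw [Finset.sdiff_empty, isPerfectMatching_iff] at hM
    exact ⟨hM.1, hM.2.1, hM.2.2, fun p hp q hq => hpd hp hq⟩
  · rintro ⟨hcard, hsub, huniq, hpd⟩
    refine ⟨Finset.empty_subset x, ?_, fun p hp q hq => hpd p hp q hq, by simp⟩
    rw [Finset.sdiff_empty]
    exact isPerfectMatching_iff.mpr ⟨hcard, hsub, huniq⟩

namespace IsPathMatching

theorem eq_empty_of_even (h : IsPathMatching t x o M) (ho : o.card ≤ 1) (hx : Even x.card) :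
    o = ∅ := by
  have hcard := h.isPerfectMatching.card_eq
  rw [Finset.card_sdiff_of_subset h.subset] at hcard
  have hox := Finset.card_le_card h.subset
  obtain ⟨k, hk⟩ := hx
  exact Finset.card_eq_zero.mp (by omega)

theorem eq_of_leaf {i : ℕ} (h : IsPathMatching (leaf i) x o M) (hx : x ⊆ (leaf i).leaves) :
    o = x ∧ M = ∅ := by
  have hM : M = ∅ := Finset.eq_empty_of_forall_notMem fun p hp => by
    have hpi : p ⊆ {i} := (h.isPerfectMatching.subset hp).trans (Finset.sdiff_subset.trans hx)
    have := Finset.card_le_card hpi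
    rw [h.isPerfectMatching.card_eq_two p hp, Finset.card_singleton] at this
    omega
  have hxo : x \ o = ∅ := by rw [← h.isPerfectMatching.sup_eq, hM, Finset.sup_empty]; rfl
  exact ⟨h.subset.antisymm (Finset.sdiff_eq_empty_iff_subset.mp hxo), hM⟩

theorem pathSet_eq {s : PhyloTree} (h : IsPathMatching s x o M) (hnd : t.leafList.Nodup)
    (hs : s ∈ t.subtrees) (hx : x ⊆ s.leaves) {p : Finset ℕ} (hp : p ∈ M) :
    t.pathSet p = s.pathSet p :=
  pathSet_eq_of_mem_subtrees hnd hs ((h.isPerfectMatching.subset hp).trans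
    (Finset.sdiff_subset.trans hx)) (h.isPerfectMatching.nonempty hp)

theorem join (h : IsPathMatching t x o M) (ho : o.card = 2) :
    IsPathMatching t x ∅ (insert o M) where
  subset := Finset.empty_subset x
  isPerfectMatching := by
    rw [Finset.sdiff_empty]
    exact h.isPerfectMatching.insert h.subset ho
  pairwiseDisjoint := by
    rw [Finset.coe_insert]
    refine h.pairwiseDisjoint.insert fun q hq _ => Finset.disjoint_left.mpr fun s hso hsq => ?_
    obtain ⟨-, ℓ, hℓo, hℓs⟩ := Finset.mem_filter.mp hso
    exact Finset.disjoint_left.mp (h.disjoint_leaves q hq s hsq) hℓo hℓs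
  disjoint_leaves := by simp

theorem erase (h : IsPathMatching t x o M) {p : Finset ℕ} (hp : p ∈ M)
    (hroot : t.mrcaSet p = t) : IsPathMatching t x (o ∪ p) (M.erase p) where
  subset := Finset.union_subset h.subset
    ((h.isPerfectMatching.subset hp).trans Finset.sdiff_subset)
  isPerfectMatching := by
    rw [show x \ (o ∪ p) = (x \ o) \ p from sdiff_sdiff_left.symm]
    exact h.isPerfectMatching.erase hp
  pairwiseDisjoint := h.pairwiseDisjoint.subset (Finset.coe_subset.mpr (Finset.erase_subset _ _))
  disjoint_leaves q hq s hs := by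
    have hqM := Finset.mem_of_mem_erase hq
    refine Finset.disjoint_union_left.mpr ⟨h.disjoint_leaves q hqM s hs,
      Finset.disjoint_left.mpr fun ℓ hℓp hℓs => ?_⟩
    have hsp := mem_pathSet_of_mrcaSet_eq hroot (pathSet_subset_subtrees t q hs) hℓp hℓs
    exact Finset.disjoint_left.mp (h.pairwiseDisjoint hqM hp (Finset.ne_of_mem_erase hq)) hs hsp

theorem restrict {s : PhyloTree} (hnd : t.leafList.Nodup) (hs : s ∈ t.subtrees)
    (h : IsPathMatching t x o M) (hM : ∀ p ∈ M, p ⊆ s.leaves ∨ Disjoint p s.leaves) :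
    IsPathMatching s (x ∩ s.leaves) (o ∩ s.leaves) (M.filter (· ⊆ s.leaves)) := by
  have hpath : ∀ p ∈ M.filter (· ⊆ s.leaves), t.pathSet p = s.pathSet p := fun p hp =>
    pathSet_eq_of_mem_subtrees hnd hs (Finset.mem_filter.mp hp).2
      (h.isPerfectMatching.nonempty (Finset.mem_of_mem_filter p hp))
  refine ⟨Finset.inter_subset_inter_right h.subset, ?_, fun p hp q hq hpq => ?_,
    fun p hp v hv => ?_⟩
  · rw [show (x ∩ s.leaves) \ (o ∩ s.leaves) = (x \ o) ∩ s.leaves from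
      (inf_sdiff_distrib_right _ _ _).symm]
    exact h.isPerfectMatching.filter hM
  · rw [Function.onFun, ← hpath p hp, ← hpath q hq]
    exact h.pairwiseDisjoint (Finset.mem_of_mem_filter p hp) (Finset.mem_of_mem_filter q hq) hpq
  · rw [← hpath p hp] at hv
    exact (h.disjoint_leaves p (Finset.mem_of_mem_filter p hp) v hv).mono_left
      Finset.inter_subset_left

theorem union {xl xr ol or : Finset ℕ} {Ml Mr : Finset (Finset ℕ)}
    (hnd : (node l r).leafList.Nodup) (hxl : xl ⊆ l.leaves) (hxr : xr ⊆ r.leaves)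
    (hl : IsPathMatching l xl ol Ml) (hr : IsPathMatching r xr or Mr) :
    IsPathMatching (node l r) (xl ∪ xr) (ol ∪ or) (Ml ∪ Mr) := by
  have hd := (nodup_node_iff.mp hnd).2.2
  have hpathl p (hp : p ∈ Ml) := hl.pathSet_eq hnd (left_mem_subtrees_node l r) hxl hp
  have hpathr p (hp : p ∈ Mr) := hr.pathSet_eq hnd (right_mem_subtrees_node l r) hxr hp
  have hxlr : Disjoint xl or := hd.mono hxl (hr.subset.trans hxr)
  have hxrl : Disjoint ol xr := hd.mono (hl.subset.trans hxl) hxr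
  have hxo : (xl ∪ xr) \ (ol ∪ or) = (xl \ ol) ∪ (xr \ or) := by
    ext a
    have : a ∈ xl → a ∉ or := fun ha => Finset.disjoint_left.mp hxlr ha
    have : a ∈ ol → a ∉ xr := fun ha => Finset.disjoint_left.mp hxrl ha
    simp only [Finset.mem_union, Finset.mem_sdiff]
    tauto
  refine ⟨Finset.union_subset_union hl.subset hr.subset, ?_, ?_, fun p hp v hv => ?_⟩
  · rw [hxo]
    exact hl.isPerfectMatching.union hr.isPerfectMatching
      (hd.mono (Finset.sdiff_subset.trans hxl) (Finset.sdiff_subset.trans hxr))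
  · rw [Finset.coe_union, Set.pairwiseDisjoint_union]
    refine ⟨fun p hp q hq hpq => ?_, fun p hp q hq hpq => ?_, fun p hp q hq _ => ?_⟩
    · rw [Function.onFun, hpathl p hp, hpathl q hq]
      exact hl.pairwiseDisjoint hp hq hpq
    · rw [Function.onFun, hpathr p hp, hpathr q hq]
      exact hr.pairwiseDisjoint hp hq hpq
    · rw [hpathl p hp, hpathr q hq]
      exact (disjoint_subtrees_of_disjoint_leaves hd).mono (pathSet_subset_subtrees l p)
        (pathSet_subset_subtrees r q)
  · rcases Finset.mem_union.mp hp with hp | hp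
    · rw [hpathl p hp] at hv
      have hvl := leaves_subset_of_mem_subtrees (pathSet_subset_subtrees l p hv)
      exact Finset.disjoint_union_left.mpr ⟨hl.disjoint_leaves p hp v hv,
        hd.symm.mono (hr.subset.trans hxr) hvl⟩
    · rw [hpathr p hp] at hv
      have hvr := leaves_subset_of_mem_subtrees (pathSet_subset_subtrees r p hv)
      exact Finset.disjoint_union_left.mpr ⟨hd.mono (hl.subset.trans hxl) hvr,
        hr.disjoint_leaves p hp v hv⟩

theorem split_node (hnd : (node l r).leafList.Nodup) (hx : x ⊆ (node l r).leaves)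
    (h : IsPathMatching (node l r) x o M) (hM : ∀ p ∈ M, p ⊆ l.leaves ∨ p ⊆ r.leaves) :
    IsPathMatching l (x ∩ l.leaves) (o ∩ l.leaves) (M.filter (· ⊆ l.leaves)) ∧
      IsPathMatching r (x ∩ r.leaves) (o ∩ r.leaves) (M.filter (· ⊆ r.leaves)) ∧
      o ∩ l.leaves ∪ o ∩ r.leaves = o ∧
      M.filter (· ⊆ l.leaves) ∪ M.filter (· ⊆ r.leaves) = M := by
  have hd := (nodup_node_iff.mp hnd).2.2
  refine ⟨h.restrict hnd (left_mem_subtrees_node l r) fun p hp => ?_,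
    h.restrict hnd (right_mem_subtrees_node l r) fun p hp => ?_, ?_, ?_⟩
  · exact (hM p hp).imp_right fun hpr => hd.symm.mono_left hpr
  · exact (hM p hp).symm.imp_right fun hpl => hd.mono_left hpl
  · exact inter_leaves_union_inter_leaves (h.subset.trans hx)
  · rw [Finset.filter_union_right, Finset.filter_true_of_mem hM]

end IsPathMatching

/-- The path system at a node made from systems `(ol, Ml)`, `(or, Mr)` on its two children:
if both children have an open leaf, these two are joined through the root. -/
def glue (ol or : Finset ℕ) (Ml Mr : Finset (Finset ℕ)) : Finset ℕ × Finset (Finset ℕ) :=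
  if (ol ∪ or).card = 2 then (∅, insert (ol ∪ or) (Ml ∪ Mr)) else (ol ∪ or, Ml ∪ Mr)

theorem isPathMatching_glue {xl xr ol or : Finset ℕ} {Ml Mr : Finset (Finset ℕ)}
    (hnd : (node l r).leafList.Nodup) (hxl : xl ⊆ l.leaves) (hxr : xr ⊆ r.leaves)
    (hl : IsPathMatching l xl ol Ml) (hr : IsPathMatching r xr or Mr)
    (hol : ol.card ≤ 1) (hor : or.card ≤ 1) :
    (glue ol or Ml Mr).1.card ≤ 1 ∧
      IsPathMatching (node l r) (xl ∪ xr) (glue ol or Ml Mr).1 (glue ol or Ml Mr).2 := by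
  have h := hl.union hnd hxl hxr hr
  unfold glue
  split_ifs with h2 <;> dsimp only
  · exact ⟨by simp, h.join h2⟩
  · exact ⟨by have := Finset.card_union_le ol or; omega, h⟩

theorem IsPathMatching.exists_eq_glue (hnd : (node l r).leafList.Nodup)
    (hx : x ⊆ (node l r).leaves) (h : IsPathMatching (node l r) x o M) (ho : o.card ≤ 1) :
    ∃ ol or Ml Mr, ol.card ≤ 1 ∧ or.card ≤ 1 ∧ IsPathMatching l (x ∩ l.leaves) ol Ml ∧
      IsPathMatching r (x ∩ r.leaves) or Mr ∧ (o, M) = glue ol or Ml Mr := by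
  have hroot : ∀ p ∈ M, ¬ p ⊆ l.leaves → ¬ p ⊆ r.leaves → node l r ∈ (node l r).pathSet p := by
    intro p hp hpl hpr
    obtain ⟨ℓ, hℓ⟩ := h.isPerfectMatching.nonempty hp
    exact mem_pathSet_of_mrcaSet_eq (mrcaSet_node_of_not_subset hpl hpr) (self_mem_subtrees _)
      hℓ (hx (Finset.sdiff_subset (h.isPerfectMatching.subset hp hℓ)))
  by_cases hcross : ∃ p ∈ M, ¬ p ⊆ l.leaves ∧ ¬ p ⊆ r.leaves
  · obtain ⟨p, hp, hpl, hpr⟩ := hcross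
    obtain rfl : o = ∅ := (Finset.disjoint_self_iff_empty o).mp <|
      (h.disjoint_leaves p hp _ (hroot p hp hpl hpr)).mono_right (h.subset.trans hx)
    have h' := h.erase hp (mrcaSet_node_of_not_subset hpl hpr)
    rw [Finset.empty_union] at h'
    have hM' : ∀ q ∈ M.erase p, q ⊆ l.leaves ∨ q ⊆ r.leaves := by
      intro q hq
      by_contra! hql
      exact Finset.disjoint_left.mp (h.pairwiseDisjoint (Finset.mem_of_mem_erase hq) hp
        (Finset.ne_of_mem_erase hq)) (hroot q (Finset.mem_of_mem_erase hq) hql.1 hql.2)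
        (hroot p hp hpl hpr)
    have hcard {L : Finset ℕ} (hpL : ¬ p ⊆ L) : (p ∩ L).card ≤ 1 := by
      have := Finset.card_lt_card (Finset.ssubset_iff_subset_ne.mpr
        ⟨Finset.inter_subset_left, fun he => hpL (Finset.inter_eq_left.mp he)⟩)
      rw [h.isPerfectMatching.card_eq_two p hp] at this
      omega
    obtain ⟨hl, hr, hpo, hMp⟩ := h'.split_node hnd hx hM'
    refine ⟨_, _, _, _, hcard hpl, hcard hpr, hl, hr, ?_⟩
    rw [glue, hpo, if_pos (h.isPerfectMatching.card_eq_two p hp), hMp, Finset.insert_erase hp]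
  · push Not at hcross
    obtain ⟨hl, hr, hol, hMlr⟩ :=
      h.split_node hnd hx fun p hp => or_iff_not_imp_left.mpr (hcross p hp)
    refine ⟨_, _, _, _, (Finset.card_le_card Finset.inter_subset_left).trans ho,
      (Finset.card_le_card Finset.inter_subset_left).trans ho, hl, hr, ?_⟩
    rw [glue, hol, if_neg (by omega), hMlr]

theorem IsPathMatching.unique {o₁ o₂ : Finset ℕ} {M₁ M₂ : Finset (Finset ℕ)}
    (hnd : t.leafList.Nodup) (hx : x ⊆ t.leaves) (h₁ : IsPathMatching t x o₁ M₁)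
    (h₂ : IsPathMatching t x o₂ M₂) (ho₁ : o₁.card ≤ 1) (ho₂ : o₂.card ≤ 1) :
    o₁ = o₂ ∧ M₁ = M₂ := by
  induction t generalizing x o₁ o₂ M₁ M₂ with
  | leaf i =>
    obtain ⟨rfl, rfl⟩ := h₁.eq_of_leaf hx
    obtain ⟨rfl, rfl⟩ := h₂.eq_of_leaf hx
    exact ⟨rfl, rfl⟩
  | node l r ihl ihr =>
    obtain ⟨hndl, hndr, -⟩ := nodup_node_iff.mp hnd
    obtain ⟨ol, or, Ml, Mr, hol, hor, hl, hr, e₁⟩ := h₁.exists_eq_glue hnd hx ho₁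
    obtain ⟨ol', or', Ml', Mr', hol', hor', hl', hr', e₂⟩ := h₂.exists_eq_glue hnd hx ho₂
    obtain ⟨rfl, rfl⟩ := ihl hndl Finset.inter_subset_right hl hl' hol hol'
    obtain ⟨rfl, rfl⟩ := ihr hndr Finset.inter_subset_right hr hr' hor hor'
    exact Prod.ext_iff.mp (e₁.trans e₂.symm)

theorem exists_isPathMatching (hnd : t.leafList.Nodup) (hx : x ⊆ t.leaves) :
    ∃ o M, o.card ≤ 1 ∧ IsPathMatching t x o M := by
  induction t generalizing x with
  | leaf i =>
    exact ⟨x, ∅, (Finset.card_le_card hx).trans (by simp [leaves]), isPathMatching_self _ x⟩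
  | node l r ihl ihr =>
    obtain ⟨hndl, hndr, -⟩ := nodup_node_iff.mp hnd
    obtain ⟨ol, Ml, hol, hl⟩ := ihl hndl (Finset.inter_subset_right (s₁ := x))
    obtain ⟨or, Mr, hor, hr⟩ := ihr hndr (Finset.inter_subset_right (s₁ := x))
    obtain ⟨hcard, h⟩ := isPathMatching_glue hnd Finset.inter_subset_right
      Finset.inter_subset_right hl hr hol hor
    rw [inter_leaves_union_inter_leaves hx] at h
    exact ⟨_, _, hcard, h⟩

end PhyloTree

/-- For any even-size set `x` of leaves of a rooted binary phylogenetic tree `T`,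
there is a unique perfect matching of `x` such that the paths in `T` between
paired leaves are pairwise vertex-disjoint. -/
theorem existsUnique_disjoint_path_matching
    (n : ℕ) (t : PhyloTree) (ht : PhyloTree.IsPhylo n t)
    (x : Finset ℕ) (hx : x ⊆ Finset.range n) (hcard : Even x.card) :
    ∃! M : Finset (Finset ℕ),
      (∀ p ∈ M, p.card = 2) ∧
      (∀ p ∈ M, p ⊆ x) ∧
      (∀ ℓ ∈ x, ∃! p, p ∈ M ∧ ℓ ∈ p) ∧
      (∀ p ∈ M, ∀ q ∈ M, p ≠ q → Disjoint (t.pathSet p) (t.pathSet q)) := by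
  have hxt : x ⊆ t.leaves := by rwa [PhyloTree.leaves_eq_toFinset, ht.2]
  obtain ⟨o, M, ho, hM⟩ := PhyloTree.exists_isPathMatching ht.1 hxt
  obtain rfl := hM.eq_empty_of_even ho hcard
  refine ⟨M, PhyloTree.isPathMatching_empty_iff.mp hM, fun M' hM' => ?_⟩
  exact ((PhyloTree.isPathMatching_empty_iff.mpr hM').unique ht.1 hxt hM (by simp) (by simp)).2
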